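/- arXiv:2504.16149 — 2 statements merged into one kernel-verified Lean document; each statement's English description precedes it below -/
import Mathlib

section
/- A commutative ring k is noetherian if and only if every filtered colimit of injective k-modules is injective. -/
/-!
Noetherian ⇒ colimits injective: over a noetherian ring every ideal `I` is finitely presented, so
a map `I → colim F` factors through some stage `F j`; it extends to `k` by injectivity of `F j`,
and Baer's criterion applies.

Colimits injective ⇒ noetherian (Bass–Papp): for an ascending chain `c` of ideals choose injective
modules `E i ⊇ k ⧸ c i`. The direct sum `⨁ E i` is the filtered colimit of the finite sums, hence
injective. The map `x ↦ (x mod c i)ᵢ` on `⋃ c n` lands in it and extends to `k`; the image of `1`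
has finite support, say below `N`, and then every `x ∈ ⋃ c n` has `x mod c N = 0`.
-/

open CategoryTheory CategoryTheory.Limits

universe u

theorem Function.Exact.exists_linearMap_comp_eq {R M N P Q : Type*} [Ring R]
    [AddCommGroup M] [AddCommGroup N] [AddCommGroup P] [AddCommGroup Q]
    [Module R M] [Module R N] [Module R P] [Module R Q]
    {g : M →ₗ[R] N} {f : N →ₗ[R] P} (h : Function.Exact g f) (hf : Function.Surjective f)
    (χ : N →ₗ[R] Q) (hχ : χ ∘ₗ g = 0) : ∃ χ' : P →ₗ[R] Q, χ' ∘ₗ f = χ :=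
  ⟨(LinearMap.range g).liftQ χ (LinearMap.range_le_ker_iff.mpr hχ) ∘ₗ
      (h.linearEquivOfSurjective hf).symm.toLinearMap,
    LinearMap.ext fun x => by simp⟩

theorem Module.Injective.of_retract {R : Type*} [Ring R] {Q P : Type u} [AddCommGroup Q]
    [AddCommGroup P] [Module R Q] [Module R P] [Module.Injective R P]
    (s : Q →ₗ[R] P) (r : P →ₗ[R] Q) (hrs : r ∘ₗ s = LinearMap.id) : Module.Injective R Q where
  out _ _ _ _ _ _ f hf g := by
    obtain ⟨h, hh⟩ := Module.Injective.out (R := R) (Q := P) f hf (s ∘ₗ g)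
    exact ⟨r ∘ₗ h, fun x => by
      rw [LinearMap.comp_apply, hh, ← LinearMap.comp_apply, ← LinearMap.comp_assoc, hrs,
        LinearMap.id_comp]⟩

namespace ModuleCat

variable {k : Type u} [Ring k] {J : Type u} [SmallCategory J] [IsFiltered J]
  {F : J ⥤ ModuleCat.{u} k}

theorem colimit_exists_rep_of_finite {ι : Type*} [Finite ι]
    (x : ι → (colimit F : ModuleCat.{u} k)) :
    ∃ (j : J) (y : ι → F.obj j), ∀ i, colimit.ι F j (y i) = x i := by
  classical
  cases nonempty_fintype ι
  choose j₀ y₀ hy₀ using fun i => Concrete.colimit_exists_rep F (x i)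
  obtain ⟨j, hj⟩ := IsFiltered.sup_objs_exists (Finset.univ.image j₀)
  have u : ∀ i, j₀ i ⟶ j := fun i => (hj (Finset.mem_image_of_mem _ (Finset.mem_univ i))).some
  refine ⟨j, fun i => F.map (u i) (y₀ i), fun i => ?_⟩
  rw [← hy₀ i]
  exact ConcreteCategory.congr_hom (colimit.w F (u i)) (y₀ i)

theorem exists_lift_of_finite {ι : Type*} [Finite ι]
    (φ : (ι → k) →ₗ[k] (colimit F : ModuleCat.{u} k)) :
    ∃ (j : J) (ψ : (ι → k) →ₗ[k] F.obj j), (colimit.ι F j).hom ∘ₗ ψ = φ := by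
  classical
  cases nonempty_fintype ι
  obtain ⟨j, y, hy⟩ := colimit_exists_rep_of_finite fun i => φ (Pi.single i 1)
  refine ⟨j, Fintype.linearCombination k y, ?_⟩
  ext i
  simp [hy]

theorem exists_map_comp_eq_zero_of_finite {ι : Type*} [Finite ι] {j : J}
    (θ : (ι → k) →ₗ[k] F.obj j) (hθ : (colimit.ι F j).hom ∘ₗ θ = 0) :
    ∃ (j' : J) (u : j ⟶ j'), (F.map u).hom ∘ₗ θ = 0 := by
  classical
  choose j₀ u₀ hu₀ using fun i => Concrete.colimit_rep_eq_zero k F j (θ (Pi.single i 1))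
    (LinearMap.congr_fun hθ _)
  obtain ⟨j', u, v, huv⟩ := IsFiltered.wideSpan u₀
  refine ⟨j', u, LinearMap.pi_ext' fun i => LinearMap.ext_ring ?_⟩
  simp [← huv i, hu₀]

theorem exists_lift_of_finitePresentation {P : Type*} [AddCommGroup P] [Module k P]
    [Module.FinitePresentation k P] (φ : P →ₗ[k] (colimit F : ModuleCat.{u} k)) :
    ∃ (j : J) (ψ : P →ₗ[k] F.obj j), (colimit.ι F j).hom ∘ₗ ψ = φ := by
  obtain ⟨n, m, f, g, hf, hfg⟩ := Module.FinitePresentation.exists_fin' k P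
  obtain ⟨j, ψ, hψ⟩ := exists_lift_of_finite (φ ∘ₗ f)
  obtain ⟨j', u, hu⟩ := exists_map_comp_eq_zero_of_finite (ψ ∘ₗ g) (by
    rw [← LinearMap.comp_assoc, hψ, LinearMap.comp_assoc, hfg.linearMap_comp_eq_zero,
      LinearMap.comp_zero])
  obtain ⟨χ, hχ⟩ := hfg.exists_linearMap_comp_eq hf ((F.map u).hom ∘ₗ ψ) hu
  refine ⟨j', χ, (LinearMap.cancel_right hf).mp ?_⟩
  rw [LinearMap.comp_assoc, hχ, ← LinearMap.comp_assoc, ← ModuleCat.hom_comp, colimit.w, hψ]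

theorem injective_colimit_of_isNoetherianRing [IsNoetherianRing k]
    (hF : ∀ j, Injective (F.obj j)) : Injective (colimit F) := by
  have hbaer : Module.Baer k (colimit F : ModuleCat.{u} k) := by
    intro I g
    have := Module.finitePresentation_of_finite k I
    obtain ⟨j, ψ, hψ⟩ := exists_lift_of_finitePresentation g
    have := Module.injective_module_of_injective_object k (F.obj j) (inj := hF j)
    obtain ⟨χ, hχ⟩ := Module.Injective.extension_property k (F.obj j) I k I.subtype
      Subtype.val_injective ψ
    exact ⟨(colimit.ι F j).hom ∘ₗ χ, fun x hx => by rw [← hψ, ← hχ]; rfl⟩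
  exact Module.injective_object_of_injective_module k _ (inj := hbaer.injective)

theorem injective_colimit_desc {s : Cocone F} (hs : ∀ j, Function.Injective (s.ι.app j).hom) :
    Function.Injective (colimit.desc F s).hom := by
  refine (injective_iff_map_eq_zero _).mpr fun x hx => ?_
  obtain ⟨j, y, rfl⟩ := Concrete.colimit_exists_rep F x
  rw [← ConcreteCategory.comp_apply, colimit.ι_desc] at hx
  rw [(injective_iff_map_eq_zero _).mp (hs j) y hx, map_zero]

end ModuleCat

namespace Submodule

variable {k : Type u} [Ring k] {M : Type u} [AddCommGroup M] [Module k M]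
  {ι : Type u} [Preorder ι] (N : ι →o Submodule k M)

def diagram : ι ⥤ ModuleCat.{u} k where
  obj i := ModuleCat.of k (N i)
  map h := ModuleCat.ofHom (Submodule.inclusion (N.monotone (leOfHom h)))

def diagramCocone : Cocone (diagram N) where
  pt := ModuleCat.of k M
  ι := { app i := ModuleCat.ofHom (N i).subtype }

variable [IsFiltered ι]

theorem range_colimit_desc_diagramCocone :
    LinearMap.range (colimit.desc (diagram N) (diagramCocone N)).hom = ⨆ i, N i := by
  refine le_antisymm ?_ (iSup_le fun i x hx => ⟨colimit.ι (diagram N) i ⟨x, hx⟩, ?_⟩)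
  · rintro _ ⟨x, rfl⟩
    obtain ⟨i, y, rfl⟩ := Concrete.colimit_exists_rep (diagram N) x
    rw [← ConcreteCategory.comp_apply, colimit.ι_desc]
    exact le_iSup N i y.2
  · exact ConcreteCategory.congr_hom (colimit.ι_desc (diagramCocone N) i) _

noncomputable def colimitDiagramIso :
    colimit (diagram N) ≅ ModuleCat.of k ↥(⨆ i, N i : Submodule k M) :=
  let desc := (colimit.desc (diagram N) (diagramCocone N)).hom
  let e₁ := LinearEquiv.ofInjective desc
    (ModuleCat.injective_colimit_desc fun i => (N i).injective_subtype)
  let e₂ : LinearMap.range desc ≃ₗ[k] ↥(⨆ i, N i : Submodule k M) :=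
    LinearEquiv.ofEq _ _ (range_colimit_desc_diagramCocone N)
  (e₁.trans e₂).toModuleIso

end Submodule

section VanishingFrom

open Submodule

variable (k : Type u) [Ring k] (E : ℕ → Type u) [∀ i, AddCommGroup (E i)] [∀ i, Module k (E i)]

/-- `⨆ n, vanishingFrom k E n` is the direct sum `⨁ i, E i`, realised inside `∀ i, E i`. -/
def Submodule.vanishingFrom : ℕ →o Submodule k (∀ i, E i) where
  toFun n :=
    { carrier := {x | ∀ i, n ≤ i → x i = 0}
      add_mem' := fun hx hy i hi => by simp [hx i hi, hy i hi]
      zero_mem' := fun _ _ => rfl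
      smul_mem' := fun a x hx i hi => by simp [hx i hi] }
  monotone' _ _ h _ hx i hi := hx i (h.trans hi)

def truncation (n : ℕ) : (∀ i, E i) →ₗ[k] vanishingFrom k E n :=
  LinearMap.codRestrict _ (LinearMap.pi fun i => if i < n then LinearMap.proj i else 0)
    fun x i hi => by simp [not_lt.mpr hi]

theorem truncation_comp_subtype (n : ℕ) :
    truncation k E n ∘ₗ (vanishingFrom k E n).subtype = LinearMap.id := by
  ext x i
  rcases lt_or_ge i n with hi | hi
  · simp [truncation, LinearMap.codRestrict, hi]
  · simp [truncation, LinearMap.codRestrict, not_lt.mpr hi, x.2 i hi]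

variable {k}

theorem injective_vanishingFrom [∀ i, Module.Injective k (E i)] (n : ℕ) :
    Module.Injective k (vanishingFrom k E n) :=
  .of_retract _ _ (truncation_comp_subtype k E n)

theorem exists_stabilizes_of_injective_iSup_vanishingFrom (c : ℕ →o Ideal k)
    (toE : ∀ i, (k ⧸ c i) →ₗ[k] E i) (htoE : ∀ i, Function.Injective (toE i))
    [Module.Injective k ↥(⨆ n, vanishingFrom k E n)] :
    ∃ N, ∀ m, N ≤ m → c N = c m := by
  set V := ⨆ n, vanishingFrom k E n
  let residues : k →ₗ[k] ∀ i, E i := LinearMap.pi fun i => toE i ∘ₗ (c i).mkQ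
  have hres : ∀ n, ∀ x ∈ c n, residues x ∈ vanishingFrom k E n := fun n x hx i hi => by
    simp [residues, (Submodule.Quotient.mk_eq_zero _).mpr (c.mono hi hx)]
  have hle : (⨆ n, c n : Ideal k) ≤ V.comap residues :=
    iSup_le fun n x hx => le_iSup (vanishingFrom k E) n (hres n x hx)
  obtain ⟨g, hg⟩ := Module.Injective.extension_property k V (⨆ n, c n : Ideal k) k
    (Submodule.subtype _) Subtype.val_injective
    ((residues.domRestrict _).codRestrict V fun x => hle x.2)
  obtain ⟨N, hN⟩ := (Submodule.mem_iSup_of_directed _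
    (vanishingFrom k E).monotone.directed_le).mp (g 1).2
  refine ⟨N, fun m hm => le_antisymm (c.mono hm) fun x hx => ?_⟩
  have hgx : (g x : ∀ i, E i) = residues x :=
    congrArg Subtype.val (LinearMap.congr_fun hg ⟨x, le_iSup c m hx⟩)
  have hzero : toE N (Submodule.Quotient.mk x) = 0 :=
    calc toE N (Submodule.Quotient.mk x) = (g x : ∀ i, E i) N := by rw [hgx]; rfl
      _ = x • (g 1 : ∀ i, E i) N := by
        rw [← Pi.smul_apply, ← Submodule.coe_smul, ← map_smul, smul_eq_mul, mul_one]
      _ = 0 := by rw [hN N le_rfl, smul_zero]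
  exact (Submodule.Quotient.mk_eq_zero _).mp ((injective_iff_map_eq_zero _).mp (htoE N) _ hzero)

end VanishingFrom

open Submodule in
/-- A commutative ring `k` is noetherian iff every filtered colimit of
injective `k`-modules is injective. -/
theorem noetherian_iff_filtered_colimit_injective (k : Type) [CommRing k] :
    IsNoetherianRing k ↔
      ∀ (J : Type) (_ : SmallCategory J) (_ : IsFiltered J)
        (F : J ⥤ ModuleCat k),
        (∀ j : J, Injective (F.obj j)) → Injective (colimit F) := by
  refine ⟨fun _ J _ _ F hF => ModuleCat.injective_colimit_of_isNoetherianRing hF, fun H => ?_⟩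
  refine monotone_stabilizes_iff_noetherian.mp fun c => ?_
  let E i := Injective.under (ModuleCat.of k (k ⧸ c i))
  have hE : ∀ i, Module.Injective k (E i) := fun i =>
    Module.injective_module_of_injective_object k _ (inj := Injective.injective_under _)
  have hcolim := H ℕ inferInstance inferInstance (diagram (vanishingFrom k fun i => E i))
    fun n => Module.injective_object_of_injective_module k _
      (inj := injective_vanishingFrom (fun i => E i) n)
  have : Module.Injective k ↥(⨆ n, vanishingFrom k (fun i => E i) n) :=
    Module.injective_module_of_injective_object k ↥(⨆ n, vanishingFrom k (fun i => E i) n)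
      (inj := Injective.of_iso (colimitDiagramIso (vanishingFrom k fun i => E i)) hcolim)
  exact exists_stabilizes_of_injective_iSup_vanishingFrom (fun i => E i) c
    (fun i => (Injective.ι (ModuleCat.of k (k ⧸ c i))).hom)
    fun i => (ModuleCat.mono_iff_injective _).mp inferInstance
end

section
/- A commutative ring k is noetherian if and only if the direct sum of any family of injective k-modules is injective. -/
/-!
Over a noetherian ring every ideal `I` is finitely generated, so a linear map `I → ⨁ i, M i` lands
in finitely many summands, and Baer's criterion for those summands extends it summand by summand.

Conversely, let `F 0 ≤ F 1 ≤ ⋯` be a chain of ideals with union `I`, and embed each `R ⧸ F n`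
into an injective module `E n`. Every `x ∈ I` lies in some `F m`, so its images in the `E n`
vanish for `n ≥ m`; this gives a map `I → ⨁ n, E n`. If it extends to `g : R → ⨁ n, E n`, pick
`N` outside the support of `g 1`: for `x ∈ I` the image of `x` in `E N` is the `N`-th component
of `g x = x • g 1`, hence zero, so `I ≤ F N`.
-/

open CategoryTheory DirectSum

universe v

theorem DirectSum.exists_finset_component_eq_zero {R ι N : Type*} [Semiring R]
    {M : ι → Type*} [∀ i, AddCommMonoid (M i)] [∀ i, Module R (M i)]
    [AddCommMonoid N] [Module R N] [Module.Finite R N] (f : N →ₗ[R] ⨁ i, M i) :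
    ∃ S : Finset ι, ∀ i ∉ S, ∀ y, component R ι M i (f y) = 0 := by
  classical
  obtain ⟨s, hs⟩ := Module.Finite.fg_top (R := R) (M := N)
  refine ⟨s.biUnion fun y => (f y).support, fun i hi y => ?_⟩
  have hgen : (s : Set N) ⊆ LinearMap.ker (component R ι M i ∘ₗ f) := fun z hz => by
    by_contra hne
    exact hi (Finset.mem_biUnion.2 ⟨z, hz, (f z).mem_support_iff.2 hne⟩)
  exact Submodule.span_le.2 hgen (hs ▸ Submodule.mem_top)

theorem Module.Baer.directSum {R ι : Type*} [Ring R] [IsNoetherianRing R]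
    {M : ι → Type*} [∀ i, AddCommGroup (M i)] [∀ i, Module R (M i)]
    (h : ∀ i, Module.Baer R (M i)) : Module.Baer R (⨁ i, M i) := by
  classical
  intro I f
  obtain ⟨S, hS⟩ := DirectSum.exists_finset_component_eq_zero f
  choose g hg using fun i => h i I (component R ι M i ∘ₗ f)
  refine ⟨∑ i ∈ S, lof R ι M i ∘ₗ g i, fun x hx => DirectSum.ext_component R fun j => ?_⟩
  by_cases hj : j ∈ S
  · simpa [component.of, hj] using hg j x hx
  · simp [component.of, hj, hS j hj]

noncomputable def DirectSum.linearMapOfFinite {R ι N : Type*} [Semiring R]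
    {M : ι → Type*} [∀ i, AddCommMonoid (M i)] [∀ i, Module R (M i)]
    [AddCommMonoid N] [Module R N] (ψ : ∀ i, N →ₗ[R] M i) (hψ : ∀ y, {i | ψ i y ≠ 0}.Finite) :
    N →ₗ[R] ⨁ i, M i where
  toFun y := ⟨fun i => ψ i y, Trunc.mk ⟨(hψ y).toFinset.val, fun i => by
    simpa only [Finset.mem_val, Set.Finite.mem_toFinset, Set.mem_ofPred_eq] using
      (em (ψ i y = 0)).symm⟩⟩
  map_add' y z := DFinsupp.ext fun i => map_add (ψ i) y z
  map_smul' c y := DFinsupp.ext fun i => map_smul (ψ i) c y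

theorem Ideal.exists_iSup_le_of_baer_directSum {R : Type*} [Ring R] (F : ℕ →o Ideal R)
    {E : ℕ → Type*} [∀ n, AddCommGroup (E n)] [∀ n, Module R (E n)]
    (ψ : ∀ n, R →ₗ[R] E n) (hψ : ∀ n, LinearMap.ker (ψ n) = F n)
    (h : Module.Baer R (⨁ n, E n)) : ∃ N, ⨆ n, F n ≤ F N := by
  classical
  set I := ⨆ n, F n
  have hfin (y : I) : {n | ψ n y ≠ 0}.Finite := by
    obtain ⟨m, hm⟩ := (Submodule.mem_iSup_of_directed F F.monotone.directed_le).1 y.2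
    refine (Set.finite_Iio m).subset fun n hn => ?_
    by_contra hmn
    exact hn ((hψ n).ge (F.monotone (not_lt.1 hmn) hm))
  obtain ⟨g, hg⟩ := h I (linearMapOfFinite (fun n => ψ n ∘ₗ I.subtype) hfin)
  obtain ⟨N, hN⟩ := Infinite.exists_notMem_finset (g 1).support
  refine ⟨N, fun x hx => ?_⟩
  rw [← hψ N, LinearMap.mem_ker]
  calc ψ N x = g x N := congr_arg (· N) (hg x hx).symm
    _ = x • g 1 N := by rw [← DFinsupp.smul_apply, ← map_smul, smul_eq_mul, mul_one]
    _ = 0 := by rw [DFinsupp.notMem_support_iff.1 hN, smul_zero]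

theorem ModuleCat.exists_injective_ker_eq {R : Type*} [Ring R] [Small.{v} R] (I : Ideal R) :
    ∃ (E : ModuleCat.{v} R) (ψ : R →ₗ[R] E), Injective E ∧ LinearMap.ker ψ = I := by
  let Q := ModuleCat.of R (Shrink.{v} (R ⧸ I))
  refine ⟨Injective.under Q,
    (Injective.ι Q).hom ∘ₗ (Shrink.linearEquiv R (R ⧸ I)).symm.toLinearMap ∘ₗ I.mkQ,
    inferInstance, ?_⟩
  rw [LinearMap.ker_comp_of_ker_eq_bot _ (ModuleCat.ker_eq_bot_of_mono _), LinearEquiv.ker_comp,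
    Submodule.ker_mkQ]

theorem IsNoetherianRing.of_baer_directSum {R : Type*} [Ring R] [Small.{v} R]
    (h : ∀ E : ℕ → ModuleCat.{v} R, (∀ n, Injective (E n)) → Module.Baer R (⨁ n, E n)) :
    IsNoetherianRing R := by
  rw [isNoetherianRing_iff, ← monotone_stabilizes_iff_noetherian]
  intro F
  choose E ψ hE hψ using fun n => ModuleCat.exists_injective_ker_eq.{v} (F n)
  obtain ⟨N, hN⟩ := Ideal.exists_iSup_le_of_baer_directSum F ψ hψ (h E hE)
  exact ⟨N, fun m hm => le_antisymm (F.monotone hm) ((le_iSup F m).trans hN)⟩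

/-- A commutative ring `k` is noetherian iff the direct sum of any family of
injective `k`-modules is injective. -/
theorem noetherian_iff_directSum_injective (k : Type) [CommRing k] :
    IsNoetherianRing k ↔
      ∀ (ι : Type) (M : ι → ModuleCat k),
        (∀ i, Injective (M i)) →
          Injective (ModuleCat.of k (DirectSum ι (fun i => M i))) := by
  constructor
  · intro _ ι M hM
    have hBaer (i : ι) : Module.Baer k (M i) :=
      .of_injective (Module.injective_module_of_injective_object k (M i) (inj := hM i))
    exact Module.injective_object_of_injective_module k _
      (inj := (Module.Baer.directSum hBaer).injective)
  · intro H
    exact IsNoetherianRing.of_baer_directSum fun E hE =>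
      .of_injective (Module.injective_module_of_injective_object k _ (inj := H ℕ E hE))
end
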